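/- arXiv:0810.5524 — 2 statements merged into one kernel-verified Lean document; each statement's English description precedes it below -/
import Mathlib

section
/- Let u be an arc on the unit circle that crosses an odd number of the 2α reference half-axes, with median half-axis equal to the positive x-axis, and suppose the portion of u in its head sector has the same length as the portion in its tail sector. Then u is invariant under reflection across the x-axis, and consequently any arc v disjoint from u is also disjoint from the reflection of u across the x-axis. -/
noncomputable section

/-- The circle of circumference `2π`, as `ℝ / 2πℤ`. -/
abbrev Circle2pi := AddCircle (2 * Real.pi)

/-- The closed arc traversed clockwise (decreasing angle) from the angle `s`
(its left endpoint) through angular length `ℓ`; its right endpoint is `s - ℓ`. -/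
def arcSet (s ℓ : ℝ) : Set Circle2pi :=
  (fun t : ℝ => ((s - t : ℝ) : Circle2pi)) '' Set.Icc 0 ℓ

/-- `f` is a circular-arc representation of `G`: each vertex gets a (start angle, length)
pair describing a proper closed arc, and distinct vertices are adjacent iff
their arcs intersect. -/
def IsCARep {V : Type*} (G : SimpleGraph V) (f : V → ℝ × ℝ) : Prop :=
  (∀ v, 0 < (f v).2 ∧ (f v).2 < 2 * Real.pi) ∧
  ∀ u v, u ≠ v →
    (G.Adj u v ↔ (arcSet (f u).1 (f u).2 ∩ arcSet (f v).1 (f v).2).Nonempty)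

/-- `box(G) ≤ k`: `G` is the intersection of `k` interval graphs on `V`. -/
def BoxicityLE {V : Type*} (G : SimpleGraph V) (k : ℕ) : Prop :=
  ∃ I : Fin k → V → Set ℝ,
    (∀ i v, ∃ a b : ℝ, a ≤ b ∧ I i v = Set.Icc a b) ∧
    ∀ u v : V, u ≠ v → (G.Adj u v ↔ ∀ i, (I i u ∩ I i v).Nonempty)

/-- Reflection of the circle across the line through the center at angle `θ`. -/
def reflMap (θ : ℝ) : Circle2pi → Circle2pi := fun p => ((2 * θ : ℝ) : Circle2pi) - p

/-- The open sector `S_k` (numbered anticlockwise from the positive x-axis):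
points of the circle with angle strictly between `πk/α` and `π(k+1)/α`. -/
def sector (α : ℕ) (k : ℤ) : Set Circle2pi :=
  (fun t : ℝ => (t : Circle2pi)) '' Set.Ioo (Real.pi * k / α) (Real.pi * (k + 1) / α)

/-- Signed coordinate of a point of the circle when orthogonally projected onto the
line through the center at angle `θ` (identified with ℝ). -/
def projCoord (θ : ℝ) : Circle2pi → ℝ :=
  Function.Periodic.lift
    (f := fun x : ℝ => Real.cos (x - θ))
    (fun x => by simp only []; rw [show x + 2 * Real.pi - θ = (x - θ) + 2 * Real.pi by ring,
      Real.cos_add_two_pi])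

theorem reflMap_image_arcSet (θ s ℓ : ℝ) :
    reflMap θ '' arcSet s ℓ = arcSet (2 * θ - s + ℓ) ℓ := by
  have hcomp : reflMap θ ∘ (fun t : ℝ => ((s - t : ℝ) : Circle2pi)) =
      (fun t : ℝ => ((2 * θ - s + ℓ - t : ℝ) : Circle2pi)) ∘ (ℓ - ·) := by
    funext t
    simp only [Function.comp_apply, reflMap, ← AddCircle.coe_sub]
    congr 1
    ring
  rw [arcSet, arcSet, Set.image_image, ← Function.comp_def, hcomp, Set.image_comp,
    Set.image_const_sub_Icc, sub_self, sub_zero]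

theorem stmt10_general (α q : ℕ) (s ℓ : ℝ)
    (heq : s - Real.pi * (q : ℝ) / (α : ℝ) = -(Real.pi * (q : ℝ) / (α : ℝ)) - (s - ℓ)) :
    reflMap 0 '' arcSet s ℓ = arcSet s ℓ ∧
    ∀ W : Set Circle2pi, Disjoint W (arcSet s ℓ) →
      Disjoint W (reflMap 0 '' arcSet s ℓ) := by
  have hsymm : reflMap 0 '' arcSet s ℓ = arcSet s ℓ := by
    -- `heq` says `ℓ = 2 * s`: the arc runs from `-s` to `s`.
    rw [reflMap_image_arcSet]
    congr 1
    linarith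
  exact ⟨hsymm, fun W hW => hsymm.symm ▸ hW⟩

/-- Let `u` be an arc crossing an odd number `2q+1` of half-axes with
median half-axis the positive x-axis, i.e. its left endpoint `s` lies in the head
sector `S_q` and its right endpoint `s − ℓ` lies in the tail sector `S_{−q−1}`.
If the portion of `u` in its head sector (of length `s − πq/α`) has the same length as
the portion in its tail sector (of length `−πq/α − (s − ℓ)`), then `u` is invariant
under reflection across the x-axis; consequently any set disjoint from `u` is disjoint
from the reflection of `u`. -/
theorem stmt10 (α q : ℕ) (hα : 2 ≤ α) (s ℓ : ℝ) (h0 : 0 < ℓ)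
    (hhead : Real.pi * (q : ℝ) / (α : ℝ) < s ∧ s < Real.pi * ((q : ℝ) + 1) / (α : ℝ))
    (htail : -(Real.pi * ((q : ℝ) + 1) / (α : ℝ)) < s - ℓ ∧
      s - ℓ < -(Real.pi * (q : ℝ) / (α : ℝ)))
    (heq : s - Real.pi * (q : ℝ) / (α : ℝ) = -(Real.pi * (q : ℝ) / (α : ℝ)) - (s - ℓ)) :
    reflMap 0 '' arcSet s ℓ = arcSet s ℓ ∧
    ∀ W : Set Circle2pi, Disjoint W (arcSet s ℓ) →
      Disjoint W (reflMap 0 '' arcSet s ℓ) :=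
  stmt10_general α q s ℓ heq

end
end

section
/- For every circular arc graph G on n vertices with maximum degree Δ < ⌊n/4⌋, the boxicity of G is at most 2. -/
noncomputable section

/-!
Move the endpoint of an arc lying at angle `x ∈ [0, 2π)` to `π / n` times the number of arc
endpoints at angles below `x`. This preserves every comparison between endpoint angles, hence which
arcs meet (two arcs meet iff one contains the start of the other), and the new arc of `v` has length
`π / n` times the number of endpoints in its half-open arc: its own start and the endpoints of its
neighbours, at most `2Δ + 1 < n / 2` of them. Arcs shorter than `π / 2` meet iff their images under
`cos` and under `sin` both meet: otherwise the cosines could only agree via `t' = -t` and the sines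
via `t' = π - t` (mod `2π`), and adding up, two differences of points of the same short arc would
sum to an odd multiple of `π`.
-/

open Real Set

section CyclicInterval

variable {α : Type*} [LinearOrder α]

def cyclicIcc (a b : α) : Set α := if a ≤ b then Icc a b else Ici a ∪ Iic b

lemma left_mem_cyclicIcc (a b : α) : a ∈ cyclicIcc a b := by
  unfold cyclicIcc; split_ifs with h
  · exact ⟨le_rfl, h⟩
  · exact Or.inl le_rfl

lemma cyclicIcc_inter_nonempty_iff {a b c d : α} :
    (cyclicIcc a b ∩ cyclicIcc c d).Nonempty ↔ a ∈ cyclicIcc c d ∨ c ∈ cyclicIcc a b := by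
  refine ⟨fun ⟨x, hab, hcd⟩ => ?_, ?_⟩
  · unfold cyclicIcc at *
    split_ifs at * <;> simp only [mem_Icc, mem_union, mem_Ici, mem_Iic] at * <;>
      rcases le_total a c with h | h <;> grind
  · rintro (h | h)
    exacts [⟨a, left_mem_cyclicIcc a b, h⟩, ⟨c, h, left_mem_cyclicIcc c d⟩]

lemma mem_cyclicIcc_map_iff {β : Type*} [LinearOrder β] {φ : α → β} {s : Set α}
    (hφ : ∀ p ∈ s, ∀ q ∈ s, φ p ≤ φ q ↔ p ≤ q) {a b x : α} (ha : a ∈ s) (hb : b ∈ s)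
    (hx : x ∈ s) : φ x ∈ cyclicIcc (φ a) (φ b) ↔ x ∈ cyclicIcc a b := by
  simp only [cyclicIcc, hφ a ha b hb]
  split_ifs <;> simp only [mem_Icc, mem_union, mem_Ici, mem_Iic, hφ _ ha _ hx, hφ _ hx _ hb]

end CyclicInterval

section Arc

instance : Fact (0 < 2 * π) := ⟨two_pi_pos⟩

def angleRep (p : Circle2pi) : ℝ := AddCircle.equivIco (2 * π) 0 p

lemma angleRep_mem_Ico (p : Circle2pi) : angleRep p ∈ Ico 0 (2 * π) := by
  unfold angleRep
  simpa using (AddCircle.equivIco (2 * π) 0 p).2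

lemma coe_angleRep (p : Circle2pi) : (angleRep p : Circle2pi) = p := AddCircle.coe_equivIco

lemma angleRep_coe_of_mem_Ico {z : ℝ} (hz : z ∈ Ico 0 (2 * π)) : angleRep z = z :=
  AddCircle.equivIco_coe_of_mem (by simpa using hz)

lemma angleRep_sub_coe (p : Circle2pi) {t : ℝ} (ht : t ∈ Ico 0 (2 * π)) :
    angleRep (p - t) = if t ≤ angleRep p then angleRep p - t else angleRep p - t + 2 * π := by
  obtain ⟨hp0, hp⟩ := angleRep_mem_Ico p
  conv_lhs => rw [← coe_angleRep p, ← AddCircle.coe_sub]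
  split_ifs with h
  · exact angleRep_coe_of_mem_Ico ⟨by linarith, by linarith [ht.1]⟩
  · rw [← angleRep_coe_of_mem_Ico (z := angleRep p - t + 2 * π) ⟨by linarith [ht.2], by linarith⟩,
      AddCircle.coe_add, AddCircle.coe_period, add_zero]

def startAngle (a : ℝ × ℝ) : ℝ := angleRep ↑(a.1 - a.2)

def endAngle (a : ℝ × ℝ) : ℝ := angleRep ↑a.1

lemma startAngle_eq {a : ℝ × ℝ} (h : a.2 ∈ Ico 0 (2 * π)) :
    startAngle a = if a.2 ≤ endAngle a then endAngle a - a.2 else endAngle a - a.2 + 2 * π := by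
  rw [startAngle, AddCircle.coe_sub, angleRep_sub_coe _ h, endAngle]

lemma startAngle_ne_endAngle {a : ℝ × ℝ} (h0 : 0 < a.2) (h : a.2 < 2 * π) :
    startAngle a ≠ endAngle a := by
  rw [startAngle_eq ⟨h0.le, h⟩]
  split_ifs <;> intro he <;> linarith

lemma mem_arcSet_iff_angleRep_sub_le {s ℓ : ℝ} (h : ℓ ∈ Ico 0 (2 * π)) (p : Circle2pi) :
    p ∈ arcSet s ℓ ↔ angleRep (s - p) ≤ ℓ := by
  constructor
  · rintro ⟨t, ht, rfl⟩
    simp only [AddCircle.coe_sub, sub_sub_cancel]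
    rw [angleRep_coe_of_mem_Ico ⟨ht.1, ht.2.trans_lt h.2⟩]
    exact ht.2
  · intro hp
    refine ⟨angleRep (s - p), ⟨(angleRep_mem_Ico _).1, hp⟩, ?_⟩
    simp only [AddCircle.coe_sub, coe_angleRep, sub_sub_cancel]

lemma mem_arcSet_iff {a : ℝ × ℝ} (h : a.2 ∈ Ico 0 (2 * π)) (p : Circle2pi) :
    p ∈ arcSet a.1 a.2 ↔ angleRep p ∈ cyclicIcc (startAngle a) (endAngle a) := by
  have hdist := angleRep_sub_coe a.1 (angleRep_mem_Ico p)
  rw [coe_angleRep] at hdist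
  obtain ⟨hw0, hw⟩ := angleRep_mem_Ico p
  rw [mem_arcSet_iff_angleRep_sub_le h, hdist, startAngle_eq h, endAngle, cyclicIcc]
  split_ifs <;> simp only [mem_Icc, mem_union, mem_Ici, mem_Iic] <;> grind

end Arc

section Rank

variable {E α : Type*} [Fintype E] [LinearOrder α] (val : E → α)

def rankBelow (x : α) : ℕ := (Finset.univ.filter fun t => val t < x).card

lemma rankBelow_mono : Monotone (rankBelow val) := fun _ _ hxy =>
  Finset.card_le_card (Finset.monotone_filter_right _ fun _ _ h => h.trans_le hxy)

lemma rankBelow_lt_rankBelow {t : E} {x : α} (h : val t < x) :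
    rankBelow val (val t) < rankBelow val x :=
  Finset.card_lt_card ⟨Finset.monotone_filter_right _ fun _ _ h' => h'.trans h, fun hsub =>
    (Finset.mem_filter.1 (hsub (Finset.mem_filter.2 ⟨Finset.mem_univ t, h⟩))).2.false⟩

lemma rankBelow_le_rankBelow_iff {x : α} {t : E} :
    rankBelow val x ≤ rankBelow val (val t) ↔ x ≤ val t :=
  ⟨fun h => not_lt.1 fun hlt => (rankBelow_lt_rankBelow val hlt).not_ge h,
    fun h => rankBelow_mono val h⟩

lemma rankBelow_lt_card (t : E) : rankBelow val (val t) < Fintype.card E :=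
  Finset.card_lt_univ_of_notMem (x := t) (by simp)

open scoped Classical in
lemma rankBelow_add_card_cyclicIcc_diff (x y : α) :
    rankBelow val x + (Finset.univ.filter fun t => val t ∈ cyclicIcc x y \ {y}).card =
      rankBelow val y + if x ≤ y then 0 else Fintype.card E := by
  simp only [rankBelow]
  split_ifs with hxy
  · have hunion : Finset.univ.filter (fun t => val t < y) =
        Finset.univ.filter (fun t => val t < x) ∪
          Finset.univ.filter (fun t => val t ∈ cyclicIcc x y \ {y}) := by
      ext t
      simp only [Finset.mem_union, Finset.mem_filter, Finset.mem_univ, true_and, cyclicIcc,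
        if_pos hxy, Set.mem_sdiff, Set.mem_Icc, Set.mem_singleton_iff]
      grind
    rw [hunion, Finset.card_union_of_disjoint (Finset.disjoint_filter.2 fun t _ h₁ h₂ => ?_),
      add_zero]
    simp only [cyclicIcc, if_pos hxy, Set.mem_sdiff, Set.mem_Icc] at h₂
    exact h₂.1.1.not_gt h₁
  · have hunion : Finset.univ.filter (fun t => val t ∈ cyclicIcc x y \ {y}) =
        Finset.univ.filter (fun t => val t < y) ∪ Finset.univ.filter (fun t => ¬val t < x) := by
      ext t
      simp only [Finset.mem_union, Finset.mem_filter, Finset.mem_univ, true_and, cyclicIcc,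
        if_neg hxy, Set.mem_sdiff, Set.mem_union, Set.mem_Ici, Set.mem_Iic, Set.mem_singleton_iff]
      grind
    rw [hunion, Finset.card_union_of_disjoint (Finset.disjoint_filter.2 fun t _ h₁ h₂ => ?_),
      ← Finset.card_univ,
      ← Finset.card_filter_add_card_filter_not (s := Finset.univ) (fun t => val t < x)]
    · omega
    · exact h₂ (h₁.trans (not_le.1 hxy))

end Rank

section CARep

lemma start_mem_arcSet {a : ℝ × ℝ} (h : 0 ≤ a.2) : ((a.1 - a.2 : ℝ) : Circle2pi) ∈ arcSet a.1 a.2 :=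
  ⟨a.2, ⟨h, le_rfl⟩, rfl⟩

lemma end_mem_arcSet {a : ℝ × ℝ} (h : 0 ≤ a.2) : ((a.1 : ℝ) : Circle2pi) ∈ arcSet a.1 a.2 :=
  ⟨0, ⟨le_rfl, h⟩, by simp⟩

lemma arcSet_inter_nonempty_iff {a b : ℝ × ℝ} (ha : a.2 ∈ Ico 0 (2 * π))
    (hb : b.2 ∈ Ico 0 (2 * π)) :
    (arcSet a.1 a.2 ∩ arcSet b.1 b.2).Nonempty ↔
      startAngle a ∈ cyclicIcc (startAngle b) (endAngle b) ∨
        startAngle b ∈ cyclicIcc (startAngle a) (endAngle a) := by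
  rw [← cyclicIcc_inter_nonempty_iff]
  constructor
  · rintro ⟨p, hpa, hpb⟩
    exact ⟨angleRep p, (mem_arcSet_iff ha p).1 hpa, (mem_arcSet_iff hb p).1 hpb⟩
  · intro h
    rcases cyclicIcc_inter_nonempty_iff.1 h with h | h
    · exact ⟨_, start_mem_arcSet ha.1, (mem_arcSet_iff hb _).2 h⟩
    · exact ⟨_, (mem_arcSet_iff ha _).2 h, start_mem_arcSet hb.1⟩

variable {V : Type*} {G : SimpleGraph V} {f : V → ℝ × ℝ}

lemma isCARep_iff :
    IsCARep G f ↔ (∀ v, 0 < (f v).2 ∧ (f v).2 < 2 * π) ∧ ∀ u v, u ≠ v →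
      (G.Adj u v ↔ startAngle (f u) ∈ cyclicIcc (startAngle (f v)) (endAngle (f v)) ∨
        startAngle (f v) ∈ cyclicIcc (startAngle (f u)) (endAngle (f u))) :=
  and_congr_right fun h => forall₂_congr fun u v => imp_congr_right fun _ => by
    rw [arcSet_inter_nonempty_iff ⟨(h u).1.le, (h u).2⟩ ⟨(h v).1.le, (h v).2⟩]

lemma IsCARep.adj_of_mem_cyclicIcc (hf : IsCARep G f) {v w : V} (hvw : v ≠ w) {p : Circle2pi}
    (hp : p ∈ arcSet (f w).1 (f w).2)
    (h : angleRep p ∈ cyclicIcc (startAngle (f v)) (endAngle (f v))) : G.Adj v w :=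
  (hf.2 v w hvw).2 ⟨p, (mem_arcSet_iff ⟨(hf.1 v).1.le, (hf.1 v).2⟩ p).2 h, hp⟩

def endpointAngle (f : V → ℝ × ℝ) (t : V × Bool) : ℝ :=
  cond t.2 (endAngle (f t.1)) (startAngle (f t.1))

lemma exists_mem_arcSet_angleRep_eq {w : V} (h : 0 ≤ (f w).2) (b : Bool) :
    ∃ p ∈ arcSet (f w).1 (f w).2, angleRep p = endpointAngle f (w, b) := by
  cases b
  exacts [⟨_, start_mem_arcSet h, rfl⟩, ⟨_, end_mem_arcSet h, rfl⟩]

end CARep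

section Compression

open scoped Classical

variable {V : Type*} [Fintype V] {G : SimpleGraph V} {f : V → ℝ × ℝ}

def compressedAngle (f : V → ℝ × ℝ) (x : ℝ) : ℝ :=
  π / Fintype.card V * rankBelow (endpointAngle f) x

def arcEndpointCount (f : V → ℝ × ℝ) (v : V) : ℕ :=
  (Finset.univ.filter fun t =>
    endpointAngle f t ∈ cyclicIcc (startAngle (f v)) (endAngle (f v)) \ {endAngle (f v)}).card

def compress (f : V → ℝ × ℝ) (v : V) : ℝ × ℝ :=
  (compressedAngle f (endAngle (f v)), π / Fintype.card V * arcEndpointCount f v)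

lemma card_prod_bool : Fintype.card (V × Bool) = 2 * Fintype.card V := by
  rw [Fintype.card_prod, Fintype.card_bool, mul_comm]

lemma compressedAngle_mem_Ico (t : V × Bool) :
    compressedAngle f (endpointAngle f t) ∈ Ico 0 (2 * π) := by
  have hV : (0 : ℝ) < Fintype.card V := Nat.cast_pos.2 (Fintype.card_pos_iff.2 ⟨t.1⟩)
  have hrank : (rankBelow (endpointAngle f) (endpointAngle f t) : ℝ) + 1 ≤ 2 * Fintype.card V := by
    exact_mod_cast card_prod_bool (V := V) ▸ rankBelow_lt_card (endpointAngle f) t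
  refine ⟨by unfold compressedAngle; positivity, ?_⟩
  rw [compressedAngle, div_mul_eq_mul_div, div_lt_iff₀ hV]
  nlinarith [pi_pos]

lemma compressedAngle_le_compressedAngle_iff (t t' : V × Bool) :
    compressedAngle f (endpointAngle f t) ≤ compressedAngle f (endpointAngle f t') ↔
      endpointAngle f t ≤ endpointAngle f t' := by
  have hδ : 0 < π / Fintype.card V := div_pos pi_pos (Nat.cast_pos.2 (Fintype.card_pos_iff.2 ⟨t.1⟩))
  rw [compressedAngle, compressedAngle, mul_le_mul_iff_right₀ hδ, Nat.cast_le,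
    rankBelow_le_rankBelow_iff]

lemma endAngle_compress (v : V) :
    endAngle (compress f v) = compressedAngle f (endAngle (f v)) :=
  angleRep_coe_of_mem_Ico (compressedAngle_mem_Ico (v, true))

lemma startAngle_compress (v : V) :
    startAngle (compress f v) = compressedAngle f (startAngle (f v)) := by
  have hcount := rankBelow_add_card_cyclicIcc_diff (endpointAngle f) (startAngle (f v))
    (endAngle (f v))
  rw [card_prod_bool] at hcount
  have hV : (Fintype.card V : ℝ) ≠ 0 := Nat.cast_ne_zero.2 (Fintype.card_pos_iff.2 ⟨v⟩).ne'
  have hδ : π / Fintype.card V * (2 * Fintype.card V) = 2 * π := by field_simp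
  have hdiff : (compress f v).1 - (compress f v).2 = compressedAngle f (startAngle (f v)) -
      if startAngle (f v) ≤ endAngle (f v) then 0 else 2 * π := by
    simp only [compress, compressedAngle, arcEndpointCount]
    have hcount' := congrArg (Nat.cast (R := ℝ)) hcount
    push_cast at hcount'
    split_ifs at hcount' ⊢
    · linear_combination (-(π / Fintype.card V)) * hcount'
    · linear_combination (-(π / Fintype.card V)) * hcount' - hδ
  have hmem := compressedAngle_mem_Ico (f := f) (v, false)
  rw [startAngle, hdiff]
  split_ifs
  · rw [sub_zero]
    exact angleRep_coe_of_mem_Ico hmem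
  · rw [AddCircle.coe_sub, AddCircle.coe_period, sub_zero]
    exact angleRep_coe_of_mem_Ico hmem

lemma arcEndpointCount_pos {v : V} (h0 : 0 < (f v).2) (h : (f v).2 < 2 * π) :
    0 < arcEndpointCount f v :=
  Finset.card_pos.2 ⟨(v, false), Finset.mem_filter.2
    ⟨Finset.mem_univ _, left_mem_cyclicIcc _ _, startAngle_ne_endAngle h0 h⟩⟩

lemma arcEndpointCount_lt (v : V) : arcEndpointCount f v < 2 * Fintype.card V :=
  card_prod_bool (V := V) ▸ Finset.card_lt_univ_of_notMem (x := (v, true)) (by simp [endpointAngle])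

lemma IsCARep.arcEndpointCount_le (hf : IsCARep G f) (v : V) :
    arcEndpointCount f v ≤ 2 * (G.neighborSet v).ncard + 1 := by
  have hsub : (Finset.univ.filter fun t =>
      endpointAngle f t ∈ cyclicIcc (startAngle (f v)) (endAngle (f v)) \ {endAngle (f v)}) ⊆
        insert (v, false) (G.neighborFinset v ×ˢ Finset.univ) := by
    rintro ⟨w, b⟩ ht
    obtain ⟨hmem, hne⟩ := (Finset.mem_filter.1 ht).2
    rw [Finset.mem_insert, Finset.mem_product, SimpleGraph.mem_neighborFinset]
    by_cases hwv : w = v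
    · subst hwv
      cases b
      exacts [Or.inl rfl, (hne rfl).elim]
    · obtain ⟨p, hp, hpb⟩ := exists_mem_arcSet_angleRep_eq (hf.1 w).1.le b
      exact Or.inr ⟨hf.adj_of_mem_cyclicIcc (Ne.symm hwv) hp (hpb ▸ hmem), Finset.mem_univ _⟩
  calc arcEndpointCount f v ≤ (G.neighborFinset v ×ˢ Finset.univ).card + 1 :=
        (Finset.card_le_card hsub).trans (Finset.card_insert_le _ _)
    _ = 2 * (G.neighborSet v).ncard + 1 := by
        rw [Finset.card_product, Finset.card_univ, Fintype.card_bool, Set.ncard_eq_toFinset_card',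
          mul_comm]
        rfl

lemma IsCARep.compress (hf : IsCARep G f) : IsCARep G (compress f) := by
  rw [isCARep_iff] at hf ⊢
  refine ⟨fun v => ?_, fun u v huv => ?_⟩
  · have hV : (0 : ℝ) < Fintype.card V := Nat.cast_pos.2 (Fintype.card_pos_iff.2 ⟨v⟩)
    have hpos : (0 : ℝ) < arcEndpointCount f v :=
      Nat.cast_pos.2 (arcEndpointCount_pos (hf.1 v).1 (hf.1 v).2)
    have hlt : (arcEndpointCount f v : ℝ) < 2 * Fintype.card V := by
      exact_mod_cast arcEndpointCount_lt v
    refine ⟨mul_pos (div_pos pi_pos hV) hpos, ?_⟩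
    show π / Fintype.card V * (arcEndpointCount f v : ℝ) < 2 * π
    rw [div_mul_eq_mul_div, div_lt_iff₀ hV]
    nlinarith [pi_pos]
  · have hφ : ∀ p ∈ range (endpointAngle f), ∀ q ∈ range (endpointAngle f),
        compressedAngle f p ≤ compressedAngle f q ↔ p ≤ q := by
      rintro _ ⟨t, rfl⟩ _ ⟨t', rfl⟩
      exact compressedAngle_le_compressedAngle_iff t t'
    rw [hf.2 u v huv, startAngle_compress, startAngle_compress, endAngle_compress,
      endAngle_compress]
    exact or_congr
      (mem_cyclicIcc_map_iff hφ ⟨(v, false), rfl⟩ ⟨(v, true), rfl⟩ ⟨(u, false), rfl⟩).symm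
      (mem_cyclicIcc_map_iff hφ ⟨(u, false), rfl⟩ ⟨(u, true), rfl⟩ ⟨(v, false), rfl⟩).symm

end Compression

section Boxicity

lemma Continuous.exists_image_Icc_eq {g : ℝ → ℝ} (hg : Continuous g) {a b : ℝ} (hab : a ≤ b) :
    ∃ c d, c ≤ d ∧ g '' Icc a b = Icc c d := by
  rw [← uIcc_of_le hab, hg.continuousOn.image_uIcc]
  exact ⟨_, _, inf_le_sup, rfl⟩

lemma coe_eq_coe_iff_exists_int {x y : ℝ} :
    (x : Circle2pi) = y ↔ ∃ k : ℤ, y = x + k * (2 * π) := by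
  rw [QuotientAddGroup.eq, AddSubgroup.mem_zmultiples_iff]
  exact exists_congr fun k => by rw [zsmul_eq_mul]; constructor <;> intro h <;> linarith

lemma arcSet_eq_image_Icc (s ℓ : ℝ) : arcSet s ℓ = (↑) '' Icc (s - ℓ) s := by
  rw [arcSet, show (fun t : ℝ => ((s - t : ℝ) : Circle2pi)) = (↑) ∘ (s - ·) from rfl, image_comp,
    image_const_sub_Icc, sub_zero]

lemma coe_eq_coe_or_coe_eq_coe_of_cos_eq_of_sin_eq {t₁ t₁' t₂ t₂' : ℝ}
    (hcos : cos t₁ = cos t₁') (hsin : sin t₂ = sin t₂')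
    (h : |t₁ - t₂| < π / 2) (h' : |t₁' - t₂'| < π / 2) :
    (t₁ : Circle2pi) = t₁' ∨ (t₂ : Circle2pi) = t₂' := by
  obtain ⟨k, hk | hk⟩ := cos_eq_cos_iff.1 hcos
  · exact Or.inl (coe_eq_coe_iff_exists_int.2 ⟨k, by linarith⟩)
  obtain ⟨m, hm | hm⟩ := sin_eq_sin_iff.1 hsin
  · exact Or.inr (coe_eq_coe_iff_exists_int.2 ⟨m, by linarith⟩)
  -- otherwise `(t₁ - t₂) + (t₁' - t₂')` would be an odd multiple of `π` of absolute value `< π`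
  exfalso
  have hodd : ((2 * (k - m) - 1 : ℤ) : ℝ) * π = (t₁ - t₂) + (t₁' - t₂') := by
    push_cast; linarith
  have hlt : |((2 * (k - m) - 1 : ℤ) : ℝ)| * π < 1 * π := by
    rw [← abs_of_pos pi_pos, ← abs_mul, abs_of_pos pi_pos, hodd]
    linarith [abs_add_le (t₁ - t₂) (t₁' - t₂')]
  have hone : (1 : ℝ) ≤ |((2 * (k - m) - 1 : ℤ) : ℝ)| := by
    rw [← Int.cast_abs]
    exact_mod_cast Int.one_le_abs (by omega)
  nlinarith [pi_pos]

variable {V : Type*} {G : SimpleGraph V} {f : V → ℝ × ℝ}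

lemma IsCARep.boxicityLE_two (hf : IsCARep G f) (hshort : ∀ v, (f v).2 < π / 2) :
    BoxicityLE G 2 := by
  refine ⟨fun i v => ![cos, sin] i '' Icc ((f v).1 - (f v).2) (f v).1, fun i v => ?_,
    fun u v huv => ?_⟩
  · refine Continuous.exists_image_Icc_eq ?_ (by linarith [(hf.1 v).1])
    fin_cases i
    exacts [continuous_cos, continuous_sin]
  rw [hf.2 u v huv, arcSet_eq_image_Icc, arcSet_eq_image_Icc, Fin.forall_fin_two]
  simp only [Matrix.cons_val_zero, Matrix.cons_val_one]
  constructor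
  · rintro ⟨_, ⟨t, ht, rfl⟩, t', ht', htt'⟩
    obtain ⟨k, rfl⟩ := coe_eq_coe_iff_exists_int.1 htt'
    exact ⟨⟨_, ⟨_, ht, rfl⟩, t', ht', (cos_add_int_mul_two_pi t' k).symm⟩,
      ⟨_, ⟨_, ht, rfl⟩, t', ht', (sin_add_int_mul_two_pi t' k).symm⟩⟩
  · rintro ⟨⟨_, ⟨t₁, h₁, rfl⟩, t₁', h₁', hc⟩, ⟨_, ⟨t₂, h₂, rfl⟩, t₂', h₂', hs⟩⟩
    have hu := hshort u
    have hv := hshort v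
    rcases coe_eq_coe_or_coe_eq_coe_of_cos_eq_of_sin_eq hc.symm hs.symm
      (abs_sub_lt_iff.2 ⟨by linarith [h₁.2, h₂.1], by linarith [h₁.1, h₂.2]⟩)
      (abs_sub_lt_iff.2 ⟨by linarith [h₁'.2, h₂'.1], by linarith [h₁'.1, h₂'.2]⟩) with h | h
    exacts [⟨_, ⟨t₁, h₁, rfl⟩, t₁', h₁', h.symm⟩, ⟨_, ⟨t₂, h₂, rfl⟩, t₂', h₂', h.symm⟩]

end Boxicity

/-- a circular arc graph on `n` vertices with maximum degree `Δ < ⌊n/4⌋`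
has boxicity at most 2. -/
theorem stmt13 {V : Type*} [Fintype V] (G : SimpleGraph V)
    (hrep : ∃ f : V → ℝ × ℝ, IsCARep G f)
    (hΔ : ∀ v : V, (G.neighborSet v).ncard < Fintype.card V / 4) :
    BoxicityLE G 2 := by
  obtain ⟨f, hf⟩ := hrep
  refine hf.compress.boxicityLE_two fun v => ?_
  have hV : (0 : ℝ) < Fintype.card V := Nat.cast_pos.2 (Fintype.card_pos_iff.2 ⟨v⟩)
  have hcount : 2 * (arcEndpointCount f v : ℝ) < Fintype.card V := by
    have := hf.arcEndpointCount_le v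
    have := hΔ v
    exact_mod_cast (by omega : 2 * arcEndpointCount f v < Fintype.card V)
  show π / Fintype.card V * (arcEndpointCount f v : ℝ) < π / 2
  rw [div_mul_eq_mul_div, div_lt_div_iff₀ hV two_pos]
  nlinarith [pi_pos]
end
end
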